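/- arXiv:2012.14986 — 2 statements merged into one kernel-verified Lean document; each statement's English description precedes it below -/
import Mathlib

section
/- The skew Schur polynomial s_{P/Q}(x_1,…,x_n) is a symmetric polynomial: for every permutation σ of {1,…,n}, replacing each variable x_i by x_{σ(i)} leaves s_{P/Q} unchanged. -/
open Finset
open scoped Classical

def ShapeHyps (m n : ℕ) (P Q : ℕ → ℤ) : Prop :=
  2 ≤ n ∧ n ≤ m ∧
  (∀ r, 1 ≤ r → r < m → P (r + 1) ≤ P r) ∧ 0 ≤ P m ∧
  (∀ r, 1 ≤ r → r < m → Q (r + 1) ≤ Q r) ∧ 0 ≤ Q m ∧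
  (∀ r, 1 ≤ r → r ≤ m → Q r ≤ P r) ∧
  (∀ c : ℤ, ((Finset.Icc 1 m).filter (fun r => Q r < c ∧ c ≤ P r)).card ≤ n)

/-- The finite set of cells of the skew shape `P/Q`: pairs `(r,c)` with
`1 ≤ r ≤ m` and `Q_r < c ≤ P_r`. -/
noncomputable def cells (m : ℕ) (P Q : ℕ → ℤ) : Finset (ℕ × ℤ) :=
  (Finset.Icc 1 m ×ˢ Finset.Icc 1 (P 1)).filter fun x => Q x.1 < x.2 ∧ x.2 ≤ P x.1

/-- A semistandard `n`-tableau of skew shape `P/Q`: entries in `{1,…,n}`, rows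
weakly increasing, columns strictly increasing; values outside the cells of the
shape are normalized to `0`. -/
def IsSSYT (m n : ℕ) (P Q : ℕ → ℤ) (T : ℕ × ℤ → ℕ) : Prop :=
  (∀ x ∈ cells m P Q, 1 ≤ T x ∧ T x ≤ n) ∧
  (∀ (r : ℕ) (c : ℤ), (r, c) ∈ cells m P Q → (r, c + 1) ∈ cells m P Q →
    T (r, c) ≤ T (r, c + 1)) ∧
  (∀ (r : ℕ) (c : ℤ), (r, c) ∈ cells m P Q → (r + 1, c) ∈ cells m P Q →
    T (r, c) < T (r + 1, c)) ∧
  (∀ x, x ∉ cells m P Q → T x = 0)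

/-- `#_i(T)`: the number of cells of `T` with entry `i`. -/
noncomputable def entryCount (m : ℕ) (P Q : ℕ → ℤ) (T : ℕ × ℤ → ℕ) (i : ℕ) : ℕ :=
  ((cells m P Q).filter fun x => T x = i).card

/-- The skew Schur polynomial `s_{P/Q}(x_1,…,x_n)`, with the variable `x_{i+1}`
encoded as `MvPolynomial.X (i : Fin n)`. -/
noncomputable def skewSchur (m n : ℕ) (P Q : ℕ → ℤ) : MvPolynomial (Fin n) ℤ :=
  ∑ᶠ T ∈ {T : ℕ × ℤ → ℕ | IsSSYT m n P Q T},
    ∏ i : Fin n, MvPolynomial.X i ^ entryCount m P Q T ((i : ℕ) + 1)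

/-! Adjacent transpositions generate the symmetric group, so it suffices to exchange the
variables `x_a` and `x_{a+1}`, i.e. to find an involution on semistandard tableaux of shape `P/Q`
that swaps the numbers of entries `a` and `a + 1` and keeps all other counts. This is the
Bender–Knuth involution: an `a` directly above an `a + 1` forms a locked pair and stays put; the
remaining (free) entries `a`, `a + 1` of each row are `p` copies of `a` followed by `q` copies of
`a + 1`, and are replaced by `q` copies of `a` followed by `p` copies of `a + 1` (a free cell
becomes `a` iff fewer than `q` free cells lie to its left). Shifting a locked `a` one row down
matches the locked `a`'s with the locked `(a + 1)`'s. -/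

section RankIn

variable {α : Type*} [LinearOrder α] {s : Finset α} {x y : α}

def rankIn (s : Finset α) (x : α) : ℕ := #{y ∈ s | y < x}

lemma rankIn_lt_rankIn (hx : x ∈ s) (hxy : x < y) : rankIn s x < rankIn s y := by
  refine card_lt_card ((ssubset_iff_of_subset fun z hz => ?_).2 ⟨x, ?_, ?_⟩)
  · obtain ⟨hzs, hzx⟩ := mem_filter.1 hz
    exact mem_filter.2 ⟨hzs, hzx.trans hxy⟩
  · exact mem_filter.2 ⟨hx, hxy⟩
  · exact fun hx' => lt_irrefl x (mem_filter.1 hx').2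

lemma strictMonoOn_rankIn (s : Finset α) : StrictMonoOn (rankIn s) s :=
  fun _ hx _ _ hxy => rankIn_lt_rankIn hx hxy

lemma rankIn_lt_card (hx : x ∈ s) : rankIn s x < #s :=
  card_lt_card (filter_ssubset.2 ⟨x, hx, lt_irrefl x⟩)

lemma image_rankIn (s : Finset α) : s.image (rankIn s) = range #s := by
  refine eq_of_subset_of_card_le (fun i hi => ?_) ?_
  · obtain ⟨x, hx, rfl⟩ := mem_image.1 hi
    exact mem_range.2 (rankIn_lt_card hx)
  · rw [card_range, card_image_of_injOn (strictMonoOn_rankIn s).injOn]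

lemma card_filter_rankIn_lt (s : Finset α) (k : ℕ) : #{x ∈ s | rankIn s x < k} = min k #s := by
  have himage : ({x ∈ s | rankIn s x < k} : Finset α).image (rankIn s) = range (min k #s) := by
    rw [← filter_image (p := (· < k)), image_rankIn]
    ext i
    simp only [mem_filter, mem_range]
    omega
  rw [← card_image_of_injOn ((strictMonoOn_rankIn s).injOn.mono (filter_subset _ s)), himage,
    card_range]

lemma rankIn_lt_card_filter_iff {p : α → Prop} [DecidablePred p]
    (hp : ∀ x ∈ s, ∀ y ∈ s, p x → ¬ p y → x < y) (hx : x ∈ s) :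
    rankIn s x < #{y ∈ s | p y} ↔ p x := by
  by_cases hpx : p x
  · refine iff_of_true ?_ hpx
    calc rankIn s x ≤ #({y ∈ s | p y}.erase x) := card_le_card fun y hy => by
          obtain ⟨hys, hyx⟩ := mem_filter.1 hy
          refine mem_erase.2 ⟨hyx.ne, mem_filter.2 ⟨hys, by_contra fun hpy => ?_⟩⟩
          exact lt_asymm hyx (hp x hx y hys hpx hpy)
      _ < #{y ∈ s | p y} := card_erase_lt_of_mem (mem_filter.2 ⟨hx, hpx⟩)
  · refine iff_of_false (not_lt.2 (card_le_card fun y hy => ?_)) hpx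
    obtain ⟨hys, hpy⟩ := mem_filter.1 hy
    exact mem_filter.2 ⟨hys, hp y hys x hx hpy hpx⟩

end RankIn

section Cells

variable {m n : ℕ} {P Q : ℕ → ℤ} {T : ℕ × ℤ → ℕ} {r : ℕ} {c c' : ℤ}

lemma mem_cells :
    (r, c) ∈ cells m P Q ↔ (1 ≤ r ∧ r ≤ m) ∧ (1 ≤ c ∧ c ≤ P 1) ∧ Q r < c ∧ c ≤ P r := by
  simp only [cells, mem_filter, mem_product, mem_Icc, and_assoc]

lemma mem_cells_of_le_of_le {c'' : ℤ} (h : (r, c) ∈ cells m P Q) (h' : (r, c') ∈ cells m P Q)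
    (hc : c ≤ c'') (hc' : c'' ≤ c') : (r, c'') ∈ cells m P Q := by
  rw [mem_cells] at *
  omega

lemma ShapeHyps.succ_mem_cells (hPQ : ShapeHyps m n P Q) (h : (r, c) ∈ cells m P Q)
    (h' : (r + 1, c') ∈ cells m P Q) (hc : c ≤ c') : (r + 1, c) ∈ cells m P Q := by
  rw [mem_cells] at *
  have := hPQ.2.2.2.2.1 r h.1.1 (by omega)
  omega

lemma ShapeHyps.mem_cells_of_succ (hPQ : ShapeHyps m n P Q) (h : (r, c) ∈ cells m P Q)
    (h' : (r + 1, c') ∈ cells m P Q) (hc : c ≤ c') : (r, c') ∈ cells m P Q := by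
  rw [mem_cells] at *
  have := hPQ.2.2.1 r h.1.1 (by omega)
  omega

lemma IsSSYT.row_mono (hT : IsSSYT m n P Q T) (h : (r, c) ∈ cells m P Q)
    (h' : (r, c') ∈ cells m P Q) (hc : c ≤ c') : T (r, c) ≤ T (r, c') := by
  induction c', hc using Int.leInduction with
  | base => exact le_rfl
  | succ c' hc ih =>
    have hmid := mem_cells_of_le_of_le h h' hc (Int.le_add_one le_rfl)
    exact (ih hmid).trans (hT.2.1 r c' hmid h')

lemma finite_setOf_isSSYT (m n : ℕ) (P Q : ℕ → ℤ) : {T | IsSSYT m n P Q T}.Finite := by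
  refine (Set.finite_range fun f : cells m P Q → Fin (n + 1) =>
    fun x => if hx : x ∈ cells m P Q then (f ⟨x, hx⟩ : ℕ) else 0).subset fun T hT => ?_
  refine ⟨fun x => ⟨T x, Nat.lt_succ_of_le (hT.1 x x.2).2⟩, funext fun x => ?_⟩
  by_cases hx : x ∈ cells m P Q
  · simp [hx]
  · simp [hx, hT.2.2.2 x hx]

end Cells

namespace BenderKnuth

variable (m : ℕ) (P Q : ℕ → ℤ) (a : ℕ) (T : ℕ × ℤ → ℕ)

def IsLockedPair (x : ℕ × ℤ) : Prop :=
  x ∈ cells m P Q ∧ (x.1 + 1, x.2) ∈ cells m P Q ∧ T x = a ∧ T (x.1 + 1, x.2) = a + 1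

def IsFree (x : ℕ × ℤ) : Prop :=
  x ∈ cells m P Q ∧ (T x = a ∨ T x = a + 1) ∧ ¬ IsLockedPair m P Q a T x ∧
    ∀ r, r + 1 = x.1 → ¬ IsLockedPair m P Q a T (r, x.2)

noncomputable def freeRow (r : ℕ) : Finset ℤ := {c ∈ Ioc (Q r) (P r) | IsFree m P Q a T (r, c)}

noncomputable def freeCount (r v : ℕ) : ℕ := #{c ∈ freeRow m P Q a T r | T (r, c) = v}

noncomputable def lockedCount (v : ℕ) : ℕ :=
  #{x ∈ cells m P Q | T x = v ∧ ¬ IsFree m P Q a T x}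

noncomputable def bk : ℕ × ℤ → ℕ := fun x =>
  if IsFree m P Q a T x then
    if rankIn (freeRow m P Q a T x.1) x.2 < freeCount m P Q a T x.1 (a + 1) then a else a + 1
  else T x

variable {m n : ℕ} {P Q : ℕ → ℤ} {a : ℕ} {T : ℕ × ℤ → ℕ} {r : ℕ} {c : ℤ}

lemma IsLockedPair.not_isFree (hl : IsLockedPair m P Q a T (r, c)) :
    ¬ IsFree m P Q a T (r, c) :=
  fun hf => hf.2.2.1 hl

lemma IsLockedPair.not_isFree_succ (hl : IsLockedPair m P Q a T (r, c)) :
    ¬ IsFree m P Q a T (r + 1, c) :=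
  fun hf => hf.2.2.2 r rfl hl

lemma isLockedPair_of_not_isFree (hx : (r, c) ∈ cells m P Q) (hv : T (r, c) = a)
    (hnf : ¬ IsFree m P Q a T (r, c)) : IsLockedPair m P Q a T (r, c) := by
  by_contra hl
  refine hnf ⟨hx, Or.inl hv, hl, fun r' hr' hl' => ?_⟩
  have := hl'.2.2.2
  simp only [hr'] at this
  omega

lemma exists_isLockedPair_of_not_isFree (hx : (r, c) ∈ cells m P Q) (hv : T (r, c) = a + 1)
    (hnf : ¬ IsFree m P Q a T (r, c)) : ∃ r', r' + 1 = r ∧ IsLockedPair m P Q a T (r', c) := by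
  by_contra hl
  refine hnf ⟨hx, Or.inr hv, fun hl' => ?_, fun r' hr' hl' => hl ⟨r', hr', hl'⟩⟩
  have := hl'.2.2.1
  omega

lemma IsFree.lt_below (hT : IsSSYT m n P Q T) (hf : IsFree m P Q a T (r, c))
    (hb : (r + 1, c) ∈ cells m P Q) : a + 1 < T (r + 1, c) := by
  have hcol := hT.2.2.1 r c hf.1 hb
  rcases hf.2.1 with hv | hv
  · have : T (r + 1, c) ≠ a + 1 := fun hv' => hf.2.2.1 ⟨hf.1, hb, hv, hv'⟩
    omega
  · omega

lemma IsFree.above_lt (hT : IsSSYT m n P Q T) (hf : IsFree m P Q a T (r + 1, c))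
    (ha : (r, c) ∈ cells m P Q) : T (r, c) < a := by
  have hcol := hT.2.2.1 r c ha hf.1
  rcases hf.2.1 with hv | hv
  · omega
  · have : T (r, c) ≠ a := fun hv' => hf.2.2.2 r rfl ⟨ha, hf.1, hv', hv⟩
    omega

lemma mem_freeRow : c ∈ freeRow m P Q a T r ↔ IsFree m P Q a T (r, c) := by
  simp only [freeRow, mem_filter, mem_Ioc, and_iff_right_iff_imp]
  intro hf
  have := mem_cells.1 hf.1
  omega

lemma bk_of_not_isFree {x : ℕ × ℤ} (hnf : ¬ IsFree m P Q a T x) : bk m P Q a T x = T x :=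
  if_neg hnf

lemma bk_of_isFree (hf : IsFree m P Q a T (r, c)) : bk m P Q a T (r, c) =
    if rankIn (freeRow m P Q a T r) c < freeCount m P Q a T r (a + 1) then a else a + 1 :=
  if_pos hf

lemma bk_eq_or_of_isFree (hf : IsFree m P Q a T (r, c)) :
    bk m P Q a T (r, c) = a ∨ bk m P Q a T (r, c) = a + 1 := by
  rw [bk_of_isFree hf]
  split_ifs
  exacts [Or.inl rfl, Or.inr rfl]

lemma isLockedPair_bk_iff (hT : IsSSYT m n P Q T) :
    IsLockedPair m P Q a (bk m P Q a T) (r, c) ↔ IsLockedPair m P Q a T (r, c) := by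
  constructor
  · rintro ⟨h1, h2, hv1, hv2⟩
    have hnf1 : ¬ IsFree m P Q a T (r, c) := fun hf => by
      have hlt := hf.lt_below hT h2
      have hnf2 : ¬ IsFree m P Q a T (r + 1, c) := fun hf2 => by rcases hf2.2.1 with h | h <;> omega
      rw [bk_of_not_isFree hnf2] at hv2
      omega
    have hnf2 : ¬ IsFree m P Q a T (r + 1, c) := fun hf => by
      have := hf.above_lt hT h1
      rw [bk_of_not_isFree hnf1] at hv1
      omega
    rw [bk_of_not_isFree hnf1] at hv1
    rw [bk_of_not_isFree hnf2] at hv2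
    exact ⟨h1, h2, hv1, hv2⟩
  · intro hl
    exact ⟨hl.1, hl.2.1, (bk_of_not_isFree hl.not_isFree).trans hl.2.2.1,
      (bk_of_not_isFree hl.not_isFree_succ).trans hl.2.2.2⟩

lemma isFree_bk_iff (hT : IsSSYT m n P Q T) {x : ℕ × ℤ} :
    IsFree m P Q a (bk m P Q a T) x ↔ IsFree m P Q a T x := by
  obtain ⟨r, c⟩ := x
  by_cases hf : IsFree m P Q a T (r, c)
  · refine iff_of_true ⟨hf.1, bk_eq_or_of_isFree hf, ?_, fun r' hr' => ?_⟩ hf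
    · rw [isLockedPair_bk_iff hT]
      exact hf.2.2.1
    · rw [isLockedPair_bk_iff hT]
      exact hf.2.2.2 r' hr'
  · simp only [IsFree, bk_of_not_isFree hf, isLockedPair_bk_iff hT]

lemma freeRow_bk (hT : IsSSYT m n P Q T) (r : ℕ) :
    freeRow m P Q a (bk m P Q a T) r = freeRow m P Q a T r := by
  ext c
  rw [mem_freeRow, mem_freeRow, isFree_bk_iff hT]

lemma freeCount_eq_zero {v : ℕ} (hv : v ≠ a) (hv' : v ≠ a + 1) (r : ℕ) :
    freeCount m P Q a T r v = 0 :=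
  card_eq_zero.2 <| filter_eq_empty_iff.2 fun c hc hTc => by
    rcases (mem_freeRow.1 hc).2.1 with h | h <;> omega

lemma freeCount_add_freeCount_succ (r : ℕ) :
    freeCount m P Q a T r a + freeCount m P Q a T r (a + 1) = #(freeRow m P Q a T r) := by
  rw [← card_filter_add_card_filter_not (s := freeRow m P Q a T r) (fun c => T (r, c) = a)]
  congr 1
  refine congrArg card (filter_congr fun c hc => ?_)
  rcases (mem_freeRow.1 hc).2.1 with h | h <;> omega

lemma freeCount_bk_self (hT : IsSSYT m n P Q T) (r : ℕ) :
    freeCount m P Q a (bk m P Q a T) r a = freeCount m P Q a T r (a + 1) := by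
  have hfilter : {c ∈ freeRow m P Q a T r | bk m P Q a T (r, c) = a}
      = {c ∈ freeRow m P Q a T r | rankIn (freeRow m P Q a T r) c < freeCount m P Q a T r (a + 1)} :=
    filter_congr fun c hc => by
      rw [bk_of_isFree (mem_freeRow.1 hc)]
      split_ifs with h <;> simp [h]
  rw [freeCount, freeRow_bk hT, hfilter, card_filter_rankIn_lt, freeCount]
  exact min_eq_left (card_filter_le _ _)

lemma freeCount_bk_succ (hT : IsSSYT m n P Q T) (r : ℕ) :
    freeCount m P Q a (bk m P Q a T) r (a + 1) = freeCount m P Q a T r a := by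
  have hbk := freeCount_add_freeCount_succ (m := m) (P := P) (Q := Q) (a := a) (T := bk m P Q a T) r
  rw [freeRow_bk hT, ← freeCount_add_freeCount_succ, freeCount_bk_self hT] at hbk
  omega

lemma freeCount_bk (hT : IsSSYT m n P Q T) (r v : ℕ) :
    freeCount m P Q a (bk m P Q a T) r v = freeCount m P Q a T r (Equiv.swap a (a + 1) v) := by
  by_cases hva : v = a
  · rw [hva, Equiv.swap_apply_left, freeCount_bk_self hT]
  by_cases hvb : v = a + 1
  · rw [hvb, Equiv.swap_apply_right, freeCount_bk_succ hT]
  rw [Equiv.swap_apply_of_ne_of_ne hva hvb, freeCount_eq_zero hva hvb, freeCount_eq_zero hva hvb]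

lemma lt_of_isFree (hT : IsSSYT m n P Q T) {c' : ℤ} (hf : IsFree m P Q a T (r, c))
    (hf' : IsFree m P Q a T (r, c')) (hv : T (r, c) = a) (hv' : T (r, c') ≠ a) : c < c' := by
  by_contra hle
  have := hT.row_mono hf'.1 hf.1 (not_lt.1 hle)
  rcases hf'.2.1 with h | h <;> omega

lemma rankIn_lt_freeCount_iff (hT : IsSSYT m n P Q T) (hf : IsFree m P Q a T (r, c)) :
    rankIn (freeRow m P Q a T r) c < freeCount m P Q a T r a ↔ T (r, c) = a :=
  rankIn_lt_card_filter_iff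
    (fun _ hx _ hy => lt_of_isFree hT (mem_freeRow.1 hx) (mem_freeRow.1 hy))
    (mem_freeRow.2 hf)

lemma bk_bk (hT : IsSSYT m n P Q T) : bk m P Q a (bk m P Q a T) = T := by
  funext ⟨r, c⟩
  by_cases hf : IsFree m P Q a T (r, c)
  · rw [bk_of_isFree ((isFree_bk_iff hT).2 hf), freeRow_bk hT, freeCount_bk_succ hT]
    split_ifs with hrk
    · exact ((rankIn_lt_freeCount_iff hT hf).1 hrk).symm
    · rcases hf.2.1 with hv | hv
      · exact absurd ((rankIn_lt_freeCount_iff hT hf).2 hv) hrk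
      · exact hv.symm
  · rw [bk_of_not_isFree (mt (isFree_bk_iff hT).1 hf), bk_of_not_isFree hf]

lemma bk_le_bk_right (hPQ : ShapeHyps m n P Q) (hT : IsSSYT m n P Q T)
    (h : (r, c) ∈ cells m P Q) (h' : (r, c + 1) ∈ cells m P Q) :
    bk m P Q a T (r, c) ≤ bk m P Q a T (r, c + 1) := by
  have hrow := hT.2.1 r c h h'
  by_cases hf : IsFree m P Q a T (r, c) <;> by_cases hf' : IsFree m P Q a T (r, c + 1)
  · have := rankIn_lt_rankIn (mem_freeRow.2 hf) (lt_add_one c)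
    rw [bk_of_isFree hf, bk_of_isFree hf']
    split_ifs <;> omega
  · -- a locked `a` at `(r, c + 1)` would put an entry `≤ a + 1` below the free `(r, c)`
    have hge : a + 1 ≤ T (r, c + 1) := by
      by_contra hlt
      have hl := isLockedPair_of_not_isFree h' (by rcases hf.2.1 with h | h <;> omega) hf'
      have hb := hPQ.succ_mem_cells h hl.2.1 (lt_add_one c).le
      have := hf.lt_below hT hb
      have := hT.2.1 (r + 1) c hb hl.2.1
      have : T (r + 1, c + 1) = a + 1 := hl.2.2.2
      omega
    rw [bk_of_not_isFree hf']
    rcases bk_eq_or_of_isFree hf with h | h <;> omega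
  · -- a locked `a + 1` at `(r, c)` would put an entry `≥ a` above the free `(r, c + 1)`
    have hle : T (r, c) ≤ a := by
      by_contra hgt
      obtain ⟨r', rfl, hl⟩ :=
        exists_isLockedPair_of_not_isFree h (by rcases hf'.2.1 with h | h <;> omega) hf
      have ha := hPQ.mem_cells_of_succ hl.1 h' (lt_add_one c).le
      have := hf'.above_lt hT ha
      have := hT.2.1 r' c hl.1 ha
      have : T (r', c) = a := hl.2.2.1
      omega
    rw [bk_of_not_isFree hf]
    rcases bk_eq_or_of_isFree hf' with h | h <;> omega
  · rwa [bk_of_not_isFree hf, bk_of_not_isFree hf']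

lemma bk_lt_bk_below (hT : IsSSYT m n P Q T) (h : (r, c) ∈ cells m P Q)
    (h' : (r + 1, c) ∈ cells m P Q) : bk m P Q a T (r, c) < bk m P Q a T (r + 1, c) := by
  by_cases hf : IsFree m P Q a T (r, c)
  · have := hf.lt_below hT h'
    have hf' : ¬ IsFree m P Q a T (r + 1, c) := fun hf' => by rcases hf'.2.1 with h | h <;> omega
    rw [bk_of_not_isFree hf']
    rcases bk_eq_or_of_isFree hf with h | h <;> omega
  rw [bk_of_not_isFree hf]
  by_cases hf' : IsFree m P Q a T (r + 1, c)
  · have := hf'.above_lt hT h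
    rcases bk_eq_or_of_isFree hf' with h | h <;> omega
  · rw [bk_of_not_isFree hf']
    exact hT.2.2.1 r c h h'

lemma isSSYT_bk (hPQ : ShapeHyps m n P Q) (hT : IsSSYT m n P Q T) (ha : 1 ≤ a)
    (hn : a + 1 ≤ n) : IsSSYT m n P Q (bk m P Q a T) := by
  refine ⟨fun ⟨r, c⟩ hx => ?_, fun r c h h' => bk_le_bk_right hPQ hT h h',
    fun r c h h' => bk_lt_bk_below hT h h', fun x hx => ?_⟩
  · by_cases hf : IsFree m P Q a T (r, c)
    · rcases bk_eq_or_of_isFree hf with h | h <;> omega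
    · rw [bk_of_not_isFree hf]
      exact hT.1 _ hx
  · rw [bk_of_not_isFree fun hf => hx hf.1]
    exact hT.2.2.2 x hx

lemma lockedCount_succ : lockedCount m P Q a T (a + 1) = lockedCount m P Q a T a := by
  refine (card_nbij (fun x => (x.1 + 1, x.2)) (fun x hx => ?_) (fun x _ y _ hxy => ?_)
    (fun y hy => ?_)).symm
  · obtain ⟨r, c⟩ := x
    obtain ⟨hx, hv, hnf⟩ := mem_filter.1 (mem_coe.1 hx)
    have hl := isLockedPair_of_not_isFree hx hv hnf
    exact mem_filter.2 ⟨hl.2.1, hl.2.2.2, hl.not_isFree_succ⟩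
  · simp only [Prod.mk.injEq, Nat.add_right_cancel_iff] at hxy
    exact Prod.ext hxy.1 hxy.2
  · obtain ⟨r, c⟩ := y
    obtain ⟨hy, hv, hnf⟩ := mem_filter.1 (mem_coe.1 hy)
    obtain ⟨r', rfl, hl⟩ := exists_isLockedPair_of_not_isFree hy hv hnf
    exact ⟨(r', c), mem_filter.2 ⟨hl.1, hl.2.2.1, hl.not_isFree⟩, rfl⟩

lemma lockedCount_swap (v : ℕ) :
    lockedCount m P Q a T (Equiv.swap a (a + 1) v) = lockedCount m P Q a T v := by
  by_cases hva : v = a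
  · rw [hva, Equiv.swap_apply_left, lockedCount_succ]
  by_cases hvb : v = a + 1
  · rw [hvb, Equiv.swap_apply_right, lockedCount_succ]
  rw [Equiv.swap_apply_of_ne_of_ne hva hvb]

lemma lockedCount_bk (hT : IsSSYT m n P Q T) (v : ℕ) :
    lockedCount m P Q a (bk m P Q a T) v = lockedCount m P Q a T v := by
  refine congrArg card (filter_congr fun x _ => ?_)
  rw [isFree_bk_iff hT]
  by_cases hf : IsFree m P Q a T x
  · simp [hf]
  · rw [bk_of_not_isFree hf]

lemma card_filter_isFree (v : ℕ) :
    #{x ∈ cells m P Q | T x = v ∧ IsFree m P Q a T x}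
      = ∑ r ∈ Icc 1 m, freeCount m P Q a T r v := by
  rw [card_eq_sum_card_fiberwise (f := Prod.fst) (t := Icc 1 m) fun ⟨r, c⟩ hx =>
    mem_Icc.2 (mem_cells.1 (mem_filter.1 hx).1).1]
  refine sum_congr rfl fun r _ => ?_
  rw [eq_comm, freeCount, ← card_map ⟨(r, ·), Prod.mk_right_injective r⟩]
  refine congrArg card (ext fun ⟨r', c⟩ => ?_)
  simp only [mem_filter, mem_map, Function.Embedding.coeFn_mk, Prod.mk.injEq, mem_freeRow]
  constructor
  · rintro ⟨c', ⟨hf, hv⟩, rfl, rfl⟩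
    exact ⟨⟨hf.1, hv, hf⟩, rfl⟩
  · rintro ⟨⟨-, hv, hf⟩, rfl⟩
    exact ⟨c, ⟨hf, hv⟩, rfl, rfl⟩

lemma entryCount_eq_sum_freeCount_add_lockedCount (v : ℕ) :
    entryCount m P Q T v = ∑ r ∈ Icc 1 m, freeCount m P Q a T r v + lockedCount m P Q a T v := by
  rw [← card_filter_isFree, entryCount, lockedCount,
    ← card_filter_add_card_filter_not (s := {x ∈ cells m P Q | T x = v}) (IsFree m P Q a T),
    filter_filter, filter_filter]

lemma entryCount_bk (hT : IsSSYT m n P Q T) (v : ℕ) :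
    entryCount m P Q (bk m P Q a T) v = entryCount m P Q T (Equiv.swap a (a + 1) v) := by
  rw [entryCount_eq_sum_freeCount_add_lockedCount (a := a),
    entryCount_eq_sum_freeCount_add_lockedCount (a := a), lockedCount_bk hT, lockedCount_swap]
  exact congrArg (· + _) (sum_congr rfl fun r _ => freeCount_bk hT r v)

end BenderKnuth

lemma MvPolynomial.isSymmetric_of_rename_swap_succ {R : Type*} [CommSemiring R] {n : ℕ}
    {φ : MvPolynomial (Fin n) R}
    (hφ : ∀ i j : Fin n, (j : ℕ) = i + 1 → rename (Equiv.swap i j) φ = φ) : φ.IsSymmetric := by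
  cases n with
  | zero => exact fun σ => by rw [Subsingleton.elim σ 1, Equiv.Perm.coe_one, rename_id_apply]
  | succ n =>
    let stab : Submonoid (Equiv.Perm (Fin (n + 1))) :=
      { carrier := {σ | rename σ φ = φ}
        one_mem' := rename_id_apply φ
        mul_mem' := fun {σ τ} (hσ : rename σ φ = φ) (hτ : rename τ φ = φ) =>
          show rename ⇑(σ * τ) φ = φ by rw [Equiv.Perm.coe_mul, ← rename_rename, hτ, hσ] }
    have hle : Submonoid.closure (Set.range fun i : Fin n => Equiv.swap i.castSucc i.succ) ≤ stab :=
      Submonoid.closure_le.2 fun _ ⟨i, hi⟩ => hi ▸ hφ _ _ (by simp)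
    exact fun σ => hle (Equiv.Perm.mclosure_swap_castSucc_succ n ▸ Submonoid.mem_top σ)

open MvPolynomial BenderKnuth in
theorem rename_swap_skewSchur {m n : ℕ} {P Q : ℕ → ℤ} (hPQ : ShapeHyps m n P Q) {i j : Fin n}
    (hij : (j : ℕ) = i + 1) : rename (Equiv.swap i j) (skewSchur m n P Q) = skewSchur m n P Q := by
  set a := (i : ℕ) + 1
  have hval (k : Fin n) : ((Equiv.swap i j k : Fin n) : ℕ) + 1 = Equiv.swap a (a + 1) (k + 1) := by
    rw [show a + 1 = (j : ℕ) + 1 by omega]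
    exact Function.Injective.map_swap (f := fun k : Fin n => (k : ℕ) + 1)
      (fun _ _ h => Fin.ext (Nat.add_right_cancel h)) i j k
  have hbk : Set.BijOn (bk m P Q a) {T | IsSSYT m n P Q T} {T | IsSSYT m n P Q T} := by
    have hmaps : Set.MapsTo (bk m P Q a) {T | IsSSYT m n P Q T} {T | IsSSYT m n P Q T} :=
      fun T hT => isSSYT_bk hPQ hT (by omega) (by omega)
    exact Set.InvOn.bijOn ⟨fun T hT => bk_bk hT, fun T hT => bk_bk hT⟩ hmaps hmaps
  refine ((rename (Equiv.swap i j)).toAddMonoidHom.map_finsum_mem _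
    (finite_setOf_isSSYT m n P Q)).trans (finsum_mem_eq_of_bijOn _ hbk fun T hT => ?_)
  show rename _ _ = _
  simp only [map_prod, map_pow, rename_X]
  rw [← Equiv.prod_comp (Equiv.swap i j)]
  refine prod_congr rfl fun k _ => ?_
  rw [Equiv.swap_apply_self, hval, entryCount_bk hT]

/-- The skew Schur polynomial `s_{P/Q}(x_1,…,x_n)` is a
symmetric polynomial: it is invariant under every permutation of its
variables. -/
theorem skewSchur_symmetric
    (m n : ℕ) (P Q : ℕ → ℤ) (h : ShapeHyps m n P Q) (σ : Equiv.Perm (Fin n)) :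
    MvPolynomial.rename σ (skewSchur m n P Q) = skewSchur m n P Q :=
  MvPolynomial.isSymmetric_of_rename_swap_succ (fun _ _ hij => rename_swap_skewSchur h hij) σ
end

section
/- For a semistandard n-tableau T of shape P/Q, define g(T)_{i,j} := Q_{i+1−j} + #{c : (i+1−j, c) is a cell of P/Q and T(i+1−j, c) ≤ i}, for i ∈ {0,…,n} and j ∈ C_i. Then T ↦ g(T) is a bijection from the set of semistandard n-tableaux of shape P/Q onto the set of GT n-parallelograms framed by P/Q. Moreover, for semistandard n-tableaux S and T of shape P/Q, one has S(r,c) ≥ T(r,c) for every cell (r,c) if and only if g(S)_{i,j} ≤ g(T)_{i,j} for every position (i,j). -/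
open Finset
open scoped Classical

def IsGT (m n : ℕ) (P Q : ℕ → ℤ) (g : ℕ → ℕ → ℤ) : Prop :=
  (∀ k < m, g 0 k = Q (k + 1)) ∧
  (∀ k < m, g n k = P (k + 1)) ∧
  (∀ i < n, ∀ k < m, g i k ≤ g (i + 1) k) ∧
  (∀ i < n, ∀ k, k + 1 < m → g (i + 1) (k + 1) ≤ g i k) ∧
  (∀ i k, n < i ∨ m ≤ k → g i k = 0)

/-- The GT `n`-parallelogram associated to a tableau `T`:
`g(T)_{i,j} = Q_{i+1-j} + #{c : (i+1-j,c) is a cell and T(i+1-j,c) ≤ i}`,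
in slot coordinates (`κ = i - j`, so the relevant row is `κ + 1`). -/
noncomputable def gOf (m n : ℕ) (P Q : ℕ → ℤ) (T : ℕ × ℤ → ℕ) : ℕ → ℕ → ℤ := fun i κ =>
  if i ≤ n ∧ κ < m then
    Q (κ + 1) + ((cells m P Q).filter fun x => x.1 = κ + 1 ∧ T x ≤ i).card
  else 0


/-!
In a semistandard tableau every row is weakly increasing, so for each `i` the cells of row `r`
with entry `≤ i` form an initial segment of the row, ending in column `g(T)_{i, r-1}`. Thus
`g(T)` records the nested shapes filled by the entries `≤ i`, and `T` is recovered from it as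
`T(r, c) = min {i | c ≤ g_{i, r-1}}`. Under this dictionary the boundary conditions of a GT
parallelogram say that the entries lie in `{1, …, n}`, and the interlacing
`g_{i+1, r} ≤ g_{i, r-1}` says that the columns increase strictly. Larger entries fill fewer
cells by time `i`, which makes the correspondence order-reversing.
-/

theorem exists_filter_Ioc_eq_Ioc_of_monotoneOn {α β : Type*} [LinearOrder α]
    [LocallyFiniteOrder α] [Preorder β] [DecidableLE β] {f : α → β} {a b : α}
    (hf : MonotoneOn f (Set.Ioc a b)) (y : β) :
    ∃ d, a ≤ d ∧ (Ioc a b).filter (fun c => f c ≤ y) = Ioc a d := by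
  set s := (Ioc a b).filter (fun c => f c ≤ y)
  have hne : (insert a s).Nonempty := insert_nonempty a s
  refine ⟨(insert a s).max' hne, le_max' _ _ (mem_insert_self a s), ?_⟩
  ext c
  constructor
  · intro hc
    exact mem_Ioc.2 ⟨(mem_Ioc.1 (mem_filter.1 hc).1).1, le_max' _ _ (mem_insert_of_mem hc)⟩
  · intro hc
    obtain ⟨hac, hcd⟩ := mem_Ioc.1 hc
    have hd : (insert a s).max' hne ∈ s :=
      (mem_insert.1 (max'_mem _ hne)).resolve_left (hac.trans_le hcd).ne'
    obtain ⟨hdab, hdy⟩ := mem_filter.1 hd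
    obtain ⟨had, hdb⟩ := mem_Ioc.1 hdab
    have hcb : c ≤ b := hcd.trans hdb
    exact mem_filter.2 ⟨mem_Ioc.2 ⟨hac, hcb⟩, (hf ⟨hac, hcb⟩ ⟨had, hdb⟩ hcd).trans hdy⟩

theorem antitoneOn_Icc_of_succ_le {β : Type*} [Preorder β] {R : ℕ → β} {a b : ℕ}
    (hR : ∀ r, a ≤ r → r < b → R (r + 1) ≤ R r) : AntitoneOn R (Set.Icc a b) :=
  antitoneOn_of_succ_le Set.ordConnected_Icc fun r _ hr hr' =>
    hR r hr.1 (Nat.lt_of_succ_le hr'.2)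

section Parallelogram

variable {m n : ℕ} {P Q : ℕ → ℤ}

theorem ShapeHyps.mem_cells_iff (h : ShapeHyps m n P Q) {r : ℕ} {c : ℤ} :
    (r, c) ∈ cells m P Q ↔ 1 ≤ r ∧ r ≤ m ∧ Q r < c ∧ c ≤ P r := by
  obtain ⟨-, -, hP, -, hQ, hQm, -, -⟩ := h
  simp only [cells, mem_filter, mem_product, mem_Icc]
  constructor
  · rintro ⟨⟨⟨hr1, hrm⟩, -⟩, hQc, hcP⟩
    exact ⟨hr1, hrm, hQc, hcP⟩
  · rintro ⟨hr1, hrm, hQc, hcP⟩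
    have hQr : Q m ≤ Q r := antitoneOn_Icc_of_succ_le hQ ⟨hr1, hrm⟩ ⟨hr1.trans hrm, le_rfl⟩ hrm
    have hPr : P r ≤ P 1 := antitoneOn_Icc_of_succ_le hP ⟨le_rfl, hr1.trans hrm⟩ ⟨hr1, hrm⟩ hr1
    exact ⟨⟨⟨hr1, hrm⟩, by omega, by omega⟩, hQc, hcP⟩

theorem ShapeHyps.card_filter_row (h : ShapeHyps m n P Q) {r : ℕ} (hr : 1 ≤ r) (hrm : r ≤ m)
    (p : ℕ × ℤ → Prop) [DecidablePred p] :
    #((cells m P Q).filter fun x => x.1 = r ∧ p x) =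
      #((Ioc (Q r) (P r)).filter fun c => p (r, c)) := by
  refine card_nbij' Prod.snd (fun c => (r, c)) ?_ ?_ ?_ ?_
  · rintro ⟨r', c⟩ hx
    simp only [coe_filter, Set.mem_ofPred_eq, h.mem_cells_iff, mem_Ioc] at hx ⊢
    obtain ⟨⟨-, -, hQc, hcP⟩, rfl, hp⟩ := hx
    exact ⟨⟨hQc, hcP⟩, hp⟩
  · intro c hc
    simp only [coe_filter, Set.mem_ofPred_eq, h.mem_cells_iff, mem_Ioc] at hc ⊢
    exact ⟨⟨hr, hrm, hc.1⟩, trivial, hc.2⟩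
  · rintro ⟨r', c⟩ hx
    simp only [coe_filter, Set.mem_ofPred_eq] at hx
    rw [hx.2.1]
  · intro c _
    rfl

/-- For a tableau `T`, the column in which the entries `≤ i` of row `r` end. -/
noncomputable def rowEnd (m : ℕ) (P Q : ℕ → ℤ) (T : ℕ × ℤ → ℕ) (i r : ℕ) : ℤ :=
  Q r + #((cells m P Q).filter fun x => x.1 = r ∧ T x ≤ i)

theorem gOf_eq_rowEnd {T : ℕ × ℤ → ℕ} {i κ : ℕ} (hi : i ≤ n) (hκ : κ < m) :
    gOf m n P Q T i κ = rowEnd m P Q T i (κ + 1) :=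
  if_pos ⟨hi, hκ⟩

theorem le_rowEnd {T : ℕ × ℤ → ℕ} {i r : ℕ} : Q r ≤ rowEnd m P Q T i r :=
  le_add_of_nonneg_right (Nat.cast_nonneg _)

theorem rowEnd_le_rowEnd {S T : ℕ × ℤ → ℕ} (hTS : ∀ x ∈ cells m P Q, T x ≤ S x) {i j : ℕ}
    (hij : i ≤ j) (r : ℕ) : rowEnd m P Q S i r ≤ rowEnd m P Q T j r := by
  unfold rowEnd
  gcongr with x hx
  exact hTS x hx

section Tableau

variable {T : ℕ × ℤ → ℕ}

theorem IsSSYT.monotoneOn_row (h : ShapeHyps m n P Q) (hT : IsSSYT m n P Q T) {r : ℕ}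
    (hr : 1 ≤ r) (hrm : r ≤ m) : MonotoneOn (fun c => T (r, c)) (Set.Ioc (Q r) (P r)) :=
  monotoneOn_of_le_succ Set.ordConnected_Ioc fun c _ hc hc' =>
    hT.2.1 r c (h.mem_cells_iff.2 ⟨hr, hrm, hc⟩) (h.mem_cells_iff.2 ⟨hr, hrm, hc'⟩)

theorem IsSSYT.filter_row_eq_Ioc (h : ShapeHyps m n P Q) (hT : IsSSYT m n P Q T) {r : ℕ}
    (hr : 1 ≤ r) (hrm : r ≤ m) (i : ℕ) :
    (Ioc (Q r) (P r)).filter (fun c => T (r, c) ≤ i) = Ioc (Q r) (rowEnd m P Q T i r) := by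
  obtain ⟨d, hQd, hd⟩ := exists_filter_Ioc_eq_Ioc_of_monotoneOn (hT.monotoneOn_row h hr hrm) i
  have : rowEnd m P Q T i r = d := by
    rw [rowEnd, h.card_filter_row hr hrm fun x => T x ≤ i, hd, Int.card_Ioc_of_le _ _ hQd]
    ring
  rw [this, ← hd]

theorem IsSSYT.mem_cells_and_le_iff (h : ShapeHyps m n P Q) (hT : IsSSYT m n P Q T) {r : ℕ}
    (hr : 1 ≤ r) (hrm : r ≤ m) (i : ℕ) (c : ℤ) :
    (r, c) ∈ cells m P Q ∧ T (r, c) ≤ i ↔ Q r < c ∧ c ≤ rowEnd m P Q T i r := by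
  rw [← mem_Ioc, ← hT.filter_row_eq_Ioc h hr hrm, mem_filter, mem_Ioc, h.mem_cells_iff]
  simp only [hr, hrm, true_and]

theorem IsSSYT.le_iff_le_rowEnd (h : ShapeHyps m n P Q) (hT : IsSSYT m n P Q T) {r : ℕ} {c : ℤ}
    (hx : (r, c) ∈ cells m P Q) (i : ℕ) : T (r, c) ≤ i ↔ c ≤ rowEnd m P Q T i r := by
  obtain ⟨hr, hrm, hQc, -⟩ := h.mem_cells_iff.1 hx
  simpa [hx, hQc] using hT.mem_cells_and_le_iff h hr hrm i c

theorem IsSSYT.rowEnd_zero (hT : IsSSYT m n P Q T) (r : ℕ) : rowEnd m P Q T 0 r = Q r := by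
  rw [rowEnd, filter_eq_empty_iff.2 fun x hx hle => by have := (hT.1 x hx).1; omega]
  simp

theorem IsSSYT.rowEnd_self (h : ShapeHyps m n P Q) (hT : IsSSYT m n P Q T) {r : ℕ}
    (hr : 1 ≤ r) (hrm : r ≤ m) : rowEnd m P Q T n r = P r := by
  have hall : (Ioc (Q r) (P r)).filter (fun c => T (r, c) ≤ n) = Ioc (Q r) (P r) :=
    filter_true_of_mem fun c hc => (hT.1 _ (h.mem_cells_iff.2 ⟨hr, hrm, mem_Ioc.1 hc⟩)).2
  rw [rowEnd, h.card_filter_row hr hrm fun x => T x ≤ n, hall,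
    Int.card_Ioc_of_le _ _ (h.2.2.2.2.2.2.1 r hr hrm)]
  ring

theorem IsSSYT.rowEnd_succ_succ_le (h : ShapeHyps m n P Q) (hT : IsSSYT m n P Q T) {r : ℕ}
    (hr : 1 ≤ r) (hrm : r + 1 ≤ m) (i : ℕ) :
    rowEnd m P Q T (i + 1) (r + 1) ≤ rowEnd m P Q T i r := by
  set b := rowEnd m P Q T (i + 1) (r + 1)
  by_contra! hlt
  have hQ : Q (r + 1) ≤ Q r := h.2.2.2.2.1 r hr (by omega)
  have hP : P (r + 1) ≤ P r := h.2.2.1 r hr (by omega)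
  have hQb : Q r < b := le_rowEnd.trans_lt hlt
  obtain ⟨hcell', hle⟩ :=
    (hT.mem_cells_and_le_iff h (by omega) hrm (i + 1) b).2 ⟨hQ.trans_lt hQb, le_rfl⟩
  obtain ⟨-, -, -, hbP⟩ := h.mem_cells_iff.1 hcell'
  have hcell : (r, b) ∈ cells m P Q := h.mem_cells_iff.2 ⟨hr, by omega, hQb, hbP.trans hP⟩
  -- the cell above `(r + 1, b)` would hold an entry `≤ i` beyond the end of row `r`
  have hcol := hT.2.2.1 r b hcell hcell'
  have hTb : ¬T (r, b) ≤ i := fun hle' => hlt.not_ge ((hT.le_iff_le_rowEnd h hcell i).1 hle')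
  omega

theorem IsSSYT.isGT_gOf (h : ShapeHyps m n P Q) (hT : IsSSYT m n P Q T) :
    IsGT m n P Q (gOf m n P Q T) := by
  refine ⟨fun κ hκ => ?_, fun κ hκ => ?_, fun i hi κ hκ => ?_, fun i hi κ hκ => ?_,
    fun i κ hiκ => if_neg (by omega)⟩
  · rw [gOf_eq_rowEnd (Nat.zero_le n) hκ, hT.rowEnd_zero]
  · rw [gOf_eq_rowEnd le_rfl hκ, hT.rowEnd_self h (by omega) hκ]
  · rw [gOf_eq_rowEnd hi.le hκ, gOf_eq_rowEnd hi hκ]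
    exact rowEnd_le_rowEnd (fun _ _ => le_rfl) (Nat.le_succ i) _
  · rw [gOf_eq_rowEnd hi (by omega), gOf_eq_rowEnd hi.le (by omega)]
    exact hT.rowEnd_succ_succ_le h (by omega) hκ i

theorem gOf_le_gOf_iff (h : ShapeHyps m n P Q) {S : ℕ × ℤ → ℕ} (hS : IsSSYT m n P Q S)
    (hT : IsSSYT m n P Q T) :
    (∀ x ∈ cells m P Q, T x ≤ S x) ↔
      ∀ i κ, i ≤ n → κ < m → gOf m n P Q S i κ ≤ gOf m n P Q T i κ := by
  constructor
  · intro hTS i κ hi hκ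
    rw [gOf_eq_rowEnd hi hκ, gOf_eq_rowEnd hi hκ]
    exact rowEnd_le_rowEnd hTS le_rfl _
  · rintro hg ⟨r, c⟩ hx
    obtain ⟨hr, hrm, -, -⟩ := h.mem_cells_iff.1 hx
    have hSn := (hS.1 _ hx).2
    have := hg _ (r - 1) hSn (by omega)
    rw [gOf_eq_rowEnd hSn (by omega), gOf_eq_rowEnd hSn (by omega), Nat.sub_add_cancel hr] at this
    exact (hT.le_iff_le_rowEnd h hx _).2 (((hS.le_iff_le_rowEnd h hx _).1 le_rfl).trans this)

theorem injOn_gOf (h : ShapeHyps m n P Q) :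
    Set.InjOn (gOf m n P Q) {T | IsSSYT m n P Q T} := by
  intro S hS T hT hST
  funext x
  by_cases hx : x ∈ cells m P Q
  · exact le_antisymm ((gOf_le_gOf_iff h hT hS).2 (fun i κ _ _ => (congrFun₂ hST i κ).ge) x hx)
      ((gOf_le_gOf_iff h hS hT).2 (fun i κ _ _ => (congrFun₂ hST i κ).le) x hx)
  · rw [hS.2.2.2 x hx, hT.2.2.2 x hx]

end Tableau

noncomputable def tableauOf (m : ℕ) (P Q : ℕ → ℤ) (g : ℕ → ℕ → ℤ) : ℕ × ℤ → ℕ := fun x =>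
  if x ∈ cells m P Q then sInf {i | x.2 ≤ g i (x.1 - 1)} else 0

section GT

variable {g : ℕ → ℕ → ℤ}

theorem IsGT.monotoneOn (hg : IsGT m n P Q g) {κ : ℕ} (hκ : κ < m) :
    MonotoneOn (fun i => g i κ) (Set.Iic n) :=
  monotoneOn_of_le_succ Set.ordConnected_Iic fun i _ _ hi => hg.2.2.1 i hi κ hκ

theorem IsGT.zero_pred (hg : IsGT m n P Q g) {r : ℕ} (hr : 1 ≤ r) (hrm : r ≤ m) :
    g 0 (r - 1) = Q r := by
  simpa [Nat.sub_add_cancel hr] using hg.1 (r - 1) (by omega)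

theorem IsGT.top_pred (hg : IsGT m n P Q g) {r : ℕ} (hr : 1 ≤ r) (hrm : r ≤ m) :
    g n (r - 1) = P r := by
  simpa [Nat.sub_add_cancel hr] using hg.2.1 (r - 1) (by omega)

theorem IsGT.tableauOf_le_iff (h : ShapeHyps m n P Q) (hg : IsGT m n P Q g) {r : ℕ} {c : ℤ}
    (hx : (r, c) ∈ cells m P Q) {i : ℕ} (hi : i ≤ n) :
    tableauOf m P Q g (r, c) ≤ i ↔ c ≤ g i (r - 1) := by
  obtain ⟨hr, hrm, -, hcP⟩ := h.mem_cells_iff.1 hx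
  have hne : n ∈ {i | c ≤ g i (r - 1)} := hcP.trans (hg.top_pred hr hrm).ge
  simp only [tableauOf, if_pos hx]
  refine ⟨fun hle => ?_, fun hc => Nat.sInf_le hc⟩
  have hmin : sInf {i | c ≤ g i (r - 1)} ≤ n := Nat.sInf_le hne
  exact (Nat.sInf_mem ⟨n, hne⟩).trans (hg.monotoneOn (by omega) hmin hi hle)

theorem IsGT.isSSYT_tableauOf (h : ShapeHyps m n P Q) (hg : IsGT m n P Q g) :
    IsSSYT m n P Q (tableauOf m P Q g) := by
  have hrange : ∀ x ∈ cells m P Q, 1 ≤ tableauOf m P Q g x ∧ tableauOf m P Q g x ≤ n := by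
    rintro ⟨r, c⟩ hx
    obtain ⟨hr, hrm, hQc, hcP⟩ := h.mem_cells_iff.1 hx
    have hpos := mt (hg.tableauOf_le_iff h hx (Nat.zero_le n)).1
    rw [hg.zero_pred hr hrm] at hpos
    exact ⟨Nat.one_le_iff_ne_zero.2 fun h0 => hpos (not_le.2 hQc) h0.le,
      (hg.tableauOf_le_iff h hx le_rfl).2 (hg.top_pred hr hrm ▸ hcP)⟩
  refine ⟨hrange, fun r c hx hx' => ?_, fun r c hx hx' => ?_, fun x hx => if_neg hx⟩
  · have hn := (hrange _ hx').2
    have := (hg.tableauOf_le_iff h hx' hn).1 le_rfl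
    exact (hg.tableauOf_le_iff h hx hn).2 (by omega)
  · set j := tableauOf m P Q g (r + 1, c)
    obtain ⟨hj, hjn⟩ := hrange _ hx'
    obtain ⟨hr, -, -, -⟩ := h.mem_cells_iff.1 hx
    obtain ⟨-, hrm, -, -⟩ := h.mem_cells_iff.1 hx'
    have hcj := (hg.tableauOf_le_iff h hx' hjn).1 le_rfl
    have hinter := hg.2.2.2.1 (j - 1) (by omega) (r - 1) (by omega)
    rw [Nat.sub_add_cancel hj, Nat.sub_add_cancel hr] at hinter
    rw [Nat.add_sub_cancel] at hcj
    have := (hg.tableauOf_le_iff h hx (by omega : j - 1 ≤ n)).2 (hcj.trans hinter)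
    omega

theorem IsGT.gOf_tableauOf (h : ShapeHyps m n P Q) (hg : IsGT m n P Q g) :
    gOf m n P Q (tableauOf m P Q g) = g := by
  funext i κ
  by_cases hiκ : i ≤ n ∧ κ < m
  · obtain ⟨hi, hκ⟩ := hiκ
    have hQg : Q (κ + 1) ≤ g i κ :=
      hg.1 κ hκ ▸ hg.monotoneOn hκ (Nat.zero_le n) hi (Nat.zero_le i)
    have hgP : g i κ ≤ P (κ + 1) := hg.2.1 κ hκ ▸ hg.monotoneOn hκ hi (le_refl n) hi
    have hIoc : Ioc (Q (κ + 1)) (rowEnd m P Q (tableauOf m P Q g) i (κ + 1)) =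
        Ioc (Q (κ + 1)) (g i κ) := by
      rw [← (hg.isSSYT_tableauOf h).filter_row_eq_Ioc h (by omega) hκ i]
      ext c
      simp only [mem_filter, mem_Ioc]
      refine ⟨fun ⟨hc, hle⟩ => ⟨hc.1, ?_⟩, fun hc => ⟨⟨hc.1, hc.2.trans hgP⟩, ?_⟩⟩
      · simpa using (hg.tableauOf_le_iff h (h.mem_cells_iff.2 ⟨by omega, hκ, hc⟩) hi).1 hle
      · have hx := h.mem_cells_iff.2 ⟨by omega, hκ, hc.1, hc.2.trans hgP⟩
        simpa using (hg.tableauOf_le_iff h hx hi).2 (by simpa using hc.2)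
    have hcard := congrArg (fun s => (#s : ℤ)) hIoc
    simp only [Int.card_Ioc_of_le _ _ hQg, Int.card_Ioc_of_le _ _ le_rowEnd] at hcard
    rw [gOf_eq_rowEnd hi hκ]
    linarith
  · exact (if_neg hiκ).trans (hg.2.2.2.2 i κ (by omega)).symm

end GT

/-- `T ↦ g(T)` is a bijection from semistandard
`n`-tableaux of shape `P/Q` onto GT `n`-parallelograms framed by `P/Q`, and it
is order-reversing in the entries: `S ≥ T` entrywise on cells iff
`g(S) ≤ g(T)` entrywise. -/
theorem tableaux_parallelogram_bijection
    (m n : ℕ) (P Q : ℕ → ℤ) (h : ShapeHyps m n P Q) :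
    Set.BijOn (gOf m n P Q)
      {T : ℕ × ℤ → ℕ | IsSSYT m n P Q T}
      {g : ℕ → ℕ → ℤ | IsGT m n P Q g} ∧
    (∀ S T : ℕ × ℤ → ℕ, IsSSYT m n P Q S → IsSSYT m n P Q T →
      ((∀ x ∈ cells m P Q, T x ≤ S x) ↔
        ∀ i κ, i ≤ n → κ < m → gOf m n P Q S i κ ≤ gOf m n P Q T i κ)) :=
  ⟨⟨fun _ hT => hT.isGT_gOf h, injOn_gOf h,
      fun g hg => ⟨tableauOf m P Q g, hg.isSSYT_tableauOf h, hg.gOf_tableauOf h⟩⟩,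
    fun _ _ hS hT => gOf_le_gOf_iff h hS hT⟩

end Parallelogram
end
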